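/- arXiv:2409.20464 — 2 statements merged into one kernel-verified Lean document; each statement's English description precedes it below -/
import Mathlib

section
/- A topological space Q satisfies: Q → {*} lies in ({ {a,b} → {*} })^{lr} if and only if Q is a retract of the product {a,b}^κ (Cantor cube) for some cardinal κ. In particular, any such Q is totally disconnected compact Hausdorff. -/
/-- The Quillen lifting property `f ⧄ g` for continuous maps. -/
def HasLift {A B X Y : Type} [TopologicalSpace A] [TopologicalSpace B] [TopologicalSpace X]
    [TopologicalSpace Y] (f : C(A, B)) (g : C(X, Y)) : Prop :=
  ∀ (t : C(A, X)) (b : C(B, Y)), (∀ a, g (t a) = b (f a)) →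
    ∃ h : C(B, X), (∀ a, h (f a) = t a) ∧ (∀ x, g (h x) = b x)

/-- The unique map to the one-point space. -/
def toUnit (X : Type) [TopologicalSpace X] : C(X, PUnit) :=
  ⟨fun _ => PUnit.unit, continuous_const⟩

theorem retract_of_lr (Q : Type) [TopologicalSpace Q]
    (H : ∀ (A B : Type) [TopologicalSpace A] [TopologicalSpace B] (f : C(A, B)),
        HasLift f (toUnit Bool) → HasLift f (toUnit Q)) :
    ∃ (κ : Type) (i : C(Q, κ → Bool)) (r : C(κ → Bool, Q)), ∀ q, r (i q) = q := by
  set i : C(Q, C(Q, Bool) → Bool) :=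
    ⟨fun q g => g q, continuous_pi fun g => g.continuous⟩ with hi
  have hlift : HasLift i (toUnit Bool) := by
    intro t b _
    exact ⟨⟨fun g => g t, continuous_apply t⟩, fun a => rfl, fun x => rfl⟩
  obtain ⟨h, h1, _⟩ := H Q (C(Q, Bool) → Bool) i hlift (ContinuousMap.id Q)
    (toUnit _) (fun a => rfl)
  exact ⟨C(Q, Bool), i, h, h1⟩

theorem lr_of_retract (Q : Type) [TopologicalSpace Q]
    (h : ∃ (κ : Type) (i : C(Q, κ → Bool)) (r : C(κ → Bool, Q)), ∀ q, r (i q) = q) :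
    ∀ (A B : Type) [TopologicalSpace A] [TopologicalSpace B] (f : C(A, B)),
        HasLift f (toUnit Bool) → HasLift f (toUnit Q) := by
  obtain ⟨κ, i, r, hri⟩ := h
  intro A B _ _ f hf t b _
  choose g hg1 _ using fun k : κ =>
    hf ⟨fun a => i (t a) k, (continuous_apply k).comp (i.continuous.comp t.continuous)⟩
      (toUnit B) (fun a => rfl)
  refine ⟨r.comp ⟨fun x k => g k x, continuous_pi fun k => (g k).continuous⟩,
    fun a => ?_, fun x => rfl⟩
  have : (fun k => g k (f a)) = i (t a) := funext fun k => hg1 k a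
  simp only [ContinuousMap.comp_apply, ContinuousMap.coe_mk, this, hri]

/-- `Q → {*}` lies in `({ {a,b} → {*} })^{lr}` (i.e. it has the right lifting
property with respect to every map in the left lifting complement of
`{a,b} → {*}`) iff `Q` is a retract of a Cantor cube `{a,b}^κ`.
In particular any such `Q` is totally disconnected compact Hausdorff. -/
theorem lr_bool_iff_retract_cantor_cube (Q : Type) [TopologicalSpace Q] :
    ((∀ (A B : Type) [TopologicalSpace A] [TopologicalSpace B] (f : C(A, B)),
        HasLift f (toUnit Bool) → HasLift f (toUnit Q)) ↔
      ∃ (κ : Type) (i : C(Q, κ → Bool)) (r : C(κ → Bool, Q)), ∀ q, r (i q) = q) ∧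
    ((∀ (A B : Type) [TopologicalSpace A] [TopologicalSpace B] (f : C(A, B)),
        HasLift f (toUnit Bool) → HasLift f (toUnit Q)) →
      TotallyDisconnectedSpace Q ∧ CompactSpace Q ∧ T2Space Q) := by
  constructor
  · exact ⟨retract_of_lr Q, lr_of_retract Q⟩
  · intro H
    obtain ⟨κ, i, r, hri⟩ := retract_of_lr Q H
    have hinj : Function.Injective i := fun x y hxy => by
      have := congrArg r hxy; simpa [hri] using this
    refine ⟨?_, ?_, ?_⟩
    · refine ⟨fun s _ hs x hx y hy => ?_⟩
      have hsub : (i '' s).Subsingleton :=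
        (hs.image i (i.continuous.continuousOn)).subsingleton
      exact hinj (hsub ⟨x, hx, rfl⟩ ⟨y, hy, rfl⟩)
    · have hsurj : Function.Surjective r := fun q => ⟨i q, hri q⟩
      have : IsCompact (Set.range r) := isCompact_range r.continuous
      rw [hsurj.range_eq] at this
      exact ⟨this⟩
    · exact T2Space.of_injective_continuous hinj i.continuous
end

section
/- Every continuous map f : X → Y of topological spaces factors as f = g ∘ h where h : X → Q × Y is in ({ {a,b} → {*} })^l and g : Q × Y → Y (the projection) is in ({ {a,b} → {*} })^{lr}; here Q is the quasi-component quotient: Q := ∏_{φ : X → {a,b}} {a,b} with X → Q given coordinatewise by the φ's. -/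
section Lifting

variable {A B Z : Type} [TopologicalSpace A] [TopologicalSpace B] [TopologicalSpace Z]

theorem hasLift_toUnit_iff (u : C(A, B)) :
    HasLift u (toUnit Z) ↔ ∀ t : C(A, Z), ∃ e : C(B, Z), ∀ a, e (u a) = t a := by
  refine ⟨fun hu t => ?_, fun hext t b _ => ?_⟩
  · obtain ⟨e, he, -⟩ := hu t (toUnit B) fun _ => rfl
    exact ⟨e, he⟩
  · obtain ⟨e, he⟩ := hext t
    exact ⟨e, he, fun _ => rfl⟩

theorem HasLift.toUnit_pi {u : C(A, B)} (hu : HasLift u (toUnit Z)) (ι : Type) :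
    HasLift u (toUnit (ι → Z)) := by
  rw [hasLift_toUnit_iff] at hu ⊢
  intro t
  choose e he using fun i => hu ((ContinuousMap.eval i).comp t)
  exact ⟨ContinuousMap.pi e, fun a => funext fun i => he i a⟩

theorem HasLift.prod_snd {u : C(A, B)} (hu : HasLift u (toUnit Z)) (Y : Type)
    [TopologicalSpace Y] : HasLift u (ContinuousMap.snd : C(Z × Y, Y)) := by
  intro t b hb
  obtain ⟨e, he⟩ := (hasLift_toUnit_iff u).1 hu (ContinuousMap.fst.comp t)
  exact ⟨e.prodMk b, fun a => Prod.ext (he a) (hb a).symm, fun _ => rfl⟩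

end Lifting

def quasiComponentMap {X Y : Type} [TopologicalSpace X] [TopologicalSpace Y] (f : C(X, Y)) :
    C(X, (C(X, Bool) → Bool) × Y) :=
  ⟨fun x => (fun φ => φ x, f x), (continuous_pi fun φ => φ.continuous).prodMk f.continuous⟩

theorem hasLift_quasiComponentMap_toUnit {X Y : Type} [TopologicalSpace X]
    [TopologicalSpace Y] (f : C(X, Y)) : HasLift (quasiComponentMap f) (toUnit Bool) :=
  (hasLift_toUnit_iff _).2 fun φ =>
    ⟨(ContinuousMap.eval φ).comp ContinuousMap.fst, fun _ => rfl⟩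

/-- Every continuous map `f : X → Y` factors as `f = g ∘ h` where
`h : X → Q × Y` lies in `({ {a,b} → {*} })^l` and the projection
`g : Q × Y → Y` lies in `({ {a,b} → {*} })^{lr}`; here
`Q := ∏_{φ : X → {a,b}} {a,b}` and `h` is given coordinatewise by the `φ`'s
together with `f`. -/
theorem factorisation_quasi_component {X Y : Type} [TopologicalSpace X] [TopologicalSpace Y]
    (f : C(X, Y)) :
    ∃ h : C(X, (C(X, Bool) → Bool) × Y),
      (∀ x, h x = (fun φ : C(X, Bool) => φ x, f x)) ∧
      (∀ x, (⟨Prod.snd, continuous_snd⟩ : C((C(X, Bool) → Bool) × Y, Y)) (h x) = f x) ∧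
      HasLift h (toUnit Bool) ∧
      (∀ (A B : Type) [TopologicalSpace A] [TopologicalSpace B] (u : C(A, B)),
        HasLift u (toUnit Bool) →
          HasLift u (⟨Prod.snd, continuous_snd⟩ : C((C(X, Bool) → Bool) × Y, Y))) :=
  ⟨quasiComponentMap f, fun _ => rfl, fun _ => rfl, hasLift_quasiComponentMap_toUnit f,
    fun _ _ _ _ _ hu => (hu.toUnit_pi _).prod_snd Y⟩
end
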